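/- Let Δ and Δ' = Δ + E be self-adjoint N×N complex matrices with ‖E‖ < 1, where ‖·‖ is the operator norm. Let c : ℕ → ℂ (indexed by l ≥ 1) satisfy Σ_{l=1}^{∞} l·|c_l| < ∞. Define G(Δ) := Σ_{l=1}^{∞} c_l · C(Δ)^l, where C(Δ) := (Δ − iI)(Δ + iI)^{-1} is the Cayley transform; this series converges absolutely in operator norm since C(Δ) is unitary and Σ_l |c_l| < ∞. Then ‖G(Δ) − G(Δ')‖ ≤ (Σ_{l=1}^{∞} l·|c_l|) · ( (‖Δ‖ + 1)·‖E‖/(1 − ‖E‖) + ‖E‖ ). -/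

import Mathlib

/-!
Everything happens in a unital C⋆-algebra. For self-adjoint `a` the spectrum is real, so `a + i`
is invertible, and `C(a) = (a + i)⋆ (a + i)⁻¹` is unitary because `a + i` is normal. From
`C(a) = 1 - 2i (a + i)⁻¹` we get `‖(a + i)⁻¹‖ ≤ 1`, so the resolvent identity gives
`‖C(a) - C(b)‖ ≤ 2 ‖a - b‖`. For contractions, `x^(n+1) - y^(n+1) = x (x^n - y^n) + (x - y) y^n`
gives `‖x^n - y^n‖ ≤ n ‖x - y‖`, so the two filters differ by at most `(∑ l |c_l|) · 2 ‖E‖`,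
which is below the stated bound because `‖E‖ ≤ ‖E‖ / (1 - ‖E‖)` when `‖E‖ < 1`.
-/

open scoped Matrix.Norms.L2Operator

/-- The Cayley transform of a matrix: `C(Δ) = (Δ - i I) (Δ + i I)⁻¹`. -/
noncomputable def cayleyTransform {N : ℕ} (Δ : Matrix (Fin N) (Fin N) ℂ) :
    Matrix (Fin N) (Fin N) ℂ :=
  (Δ - Complex.I • 1) * (Δ + Complex.I • 1)⁻¹

open Complex
open scoped Ring

theorem star_mul_inverse_mem_unitary {A : Type*} [Ring A] [StarRing A] {u : A} (hu : IsUnit u)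
    (hcomm : Commute u (star u)) : star u * u⁻¹ʳ ∈ unitary A := by
  obtain ⟨w, rfl⟩ := hu
  have hw : Commute w (star w) := Units.ext hcomm
  rw [Ring.inverse_unit, ← Units.coe_star, ← Units.val_mul]
  refine Unitary.mem_iff.mpr ⟨?_, ?_⟩ <;>
    rw [← Units.coe_star, ← Units.val_mul, ← Units.val_one] <;> congr 1 <;>
    simp only [star_mul, star_star, star_inv]
  · rw [mul_assoc _ w, ← mul_assoc w, hw.eq]; group
  · rw [mul_assoc _ w⁻¹, ← mul_assoc w⁻¹, hw.inv_inv.eq]; group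

theorem norm_le_one_of_mem_unitary {E : Type*} [NormedRing E] [StarRing E] [CStarRing E] {U : E}
    (hU : U ∈ unitary E) : ‖U‖ ≤ 1 := by
  rcases subsingleton_or_nontrivial E with _ | _
  · simp [Subsingleton.elim U 0]
  · exact (CStarRing.norm_of_mem_unitary hU).le

section Cayley

variable {A : Type*} [CStarAlgebra A]

noncomputable def cayley (a : A) : A := (a - I • 1) * (a + I • 1)⁻¹ʳ

namespace IsSelfAdjoint

variable {a b : A}

theorem isUnit_add_I_smul_one (ha : IsSelfAdjoint a) : IsUnit (a + I • 1) := by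
  have hI : -I ∉ spectrum ℂ a := fun h => by simpa using ha.im_eq_zero_of_mem_spectrum h
  have h := (spectrum.notMem_iff.mp hI).neg
  rwa [neg_sub, Algebra.algebraMap_eq_smul_one, neg_smul, sub_neg_eq_add] at h

theorem star_add_I_smul_one (ha : IsSelfAdjoint a) : star (a + I • 1) = a - I • 1 := by
  simp [ha.star_eq, sub_eq_add_neg]

theorem cayley_mem_unitary (ha : IsSelfAdjoint a) : cayley a ∈ unitary A := by
  rw [cayley, ← ha.star_add_I_smul_one]
  refine star_mul_inverse_mem_unitary ha.isUnit_add_I_smul_one ?_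
  rw [ha.star_add_I_smul_one]
  exact ((Commute.refl a).sub_right ((Commute.one_right a).smul_right I)).add_left
    ((Commute.one_left _).smul_left I)

theorem cayley_eq_one_sub (ha : IsSelfAdjoint a) :
    cayley a = 1 - (2 * I) • (a + I • 1)⁻¹ʳ := by
  have hsub : a - I • 1 = (a + I • 1) - (2 * I) • 1 := by
    rw [two_mul, add_smul]; abel
  rw [cayley, hsub, sub_mul, Ring.mul_inverse_cancel _ ha.isUnit_add_I_smul_one, smul_mul_assoc,
    one_mul]

theorem norm_inverse_add_I_smul_one_le (ha : IsSelfAdjoint a) : ‖(a + I • 1)⁻¹ʳ‖ ≤ 1 := by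
  have hinv : (a + I • 1)⁻¹ʳ = (2 * I)⁻¹ • (1 - cayley a) := by
    rw [ha.cayley_eq_one_sub, sub_sub_cancel, smul_smul, inv_mul_cancel₀ (by simp), one_smul]
  have h2I : ‖(2 * I)⁻¹‖ = 2⁻¹ := by simp
  have h1 := norm_le_one_of_mem_unitary (one_mem (unitary A))
  have hC := norm_le_one_of_mem_unitary ha.cayley_mem_unitary
  rw [hinv, norm_smul, h2I]
  linarith [norm_sub_le (1 : A) (cayley a)]

theorem norm_cayley_sub_cayley_le (ha : IsSelfAdjoint a) (hb : IsSelfAdjoint b) :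
    ‖cayley a - cayley b‖ ≤ 2 * ‖a - b‖ := by
  rw [ha.cayley_eq_one_sub, hb.cayley_eq_one_sub, sub_sub_sub_cancel_left, ← smul_sub,
    Ring.inverse_sub_inverse (by simp [hb.isUnit_add_I_smul_one, ha.isUnit_add_I_smul_one]),
    add_sub_add_right_eq_sub, norm_smul]
  have h2I : ‖(2 : ℂ) * I‖ = 2 := by simp
  calc ‖2 * I‖ * ‖(b + I • 1)⁻¹ʳ * (a - b) * (a + I • 1)⁻¹ʳ‖
      ≤ 2 * (‖(b + I • 1)⁻¹ʳ‖ * ‖a - b‖ * ‖(a + I • 1)⁻¹ʳ‖) := by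
        rw [h2I]; gcongr; exact norm_mul₃_le
    _ ≤ 2 * (1 * ‖a - b‖ * 1) := by
        gcongr
        exacts [hb.norm_inverse_add_I_smul_one_le, ha.norm_inverse_add_I_smul_one_le]
    _ = 2 * ‖a - b‖ := by ring

end IsSelfAdjoint

end Cayley

section PowerSeries

variable {A : Type*} [SeminormedRing A] {x y : A}

theorem norm_pow_le_one_of_norm_le_one (hx : ‖x‖ ≤ 1) {n : ℕ} (hn : n ≠ 0) : ‖x ^ n‖ ≤ 1 :=
  (norm_pow_le' x (Nat.pos_of_ne_zero hn)).trans (pow_le_one₀ (norm_nonneg x) hx)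

theorem norm_pow_sub_pow_le_of_norm_le_one (hx : ‖x‖ ≤ 1) (hy : ‖y‖ ≤ 1) (n : ℕ) :
    ‖x ^ n - y ^ n‖ ≤ n * ‖x - y‖ := by
  induction n with
  | zero => simp
  | succ n ih =>
    rcases eq_or_ne n 0 with rfl | hn
    · simp
    have hxy : x ^ (n + 1) - y ^ (n + 1) = x * (x ^ n - y ^ n) + (x - y) * y ^ n := by
      simp only [pow_succ']; noncomm_ring
    calc ‖x ^ (n + 1) - y ^ (n + 1)‖
        ≤ ‖x‖ * ‖x ^ n - y ^ n‖ + ‖x - y‖ * ‖y ^ n‖ := by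
          rw [hxy]; exact norm_add_le_of_le (norm_mul_le _ _) (norm_mul_le _ _)
      _ ≤ 1 * (n * ‖x - y‖) + ‖x - y‖ * 1 := by
          gcongr
          exact norm_pow_le_one_of_norm_le_one hy hn
      _ = (n + 1 : ℕ) * ‖x - y‖ := by push_cast; ring

variable {𝕜 : Type*} [NormedField 𝕜] [NormedSpace 𝕜 A] {c : ℕ → 𝕜}

theorem summable_natCast_succ_mul_norm (hc : Summable fun l : ℕ => (l : ℝ) * ‖c l‖) :
    Summable fun l : ℕ => ((l + 1 : ℕ) : ℝ) * ‖c (l + 1)‖ :=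
  (summable_nat_add_iff 1).mpr hc

theorem summable_norm_smul_pow_succ (hc : Summable fun l : ℕ => (l : ℝ) * ‖c l‖) (hx : ‖x‖ ≤ 1) :
    Summable fun l : ℕ => ‖c (l + 1) • x ^ (l + 1)‖ := by
  refine (summable_natCast_succ_mul_norm hc).of_nonneg_of_le (fun _ => norm_nonneg _) fun l => ?_
  rw [norm_smul]
  calc ‖c (l + 1)‖ * ‖x ^ (l + 1)‖ ≤ 1 * ‖c (l + 1)‖ := by
        rw [mul_comm]; gcongr; exact norm_pow_le_one_of_norm_le_one hx l.succ_ne_zero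
    _ ≤ ((l + 1 : ℕ) : ℝ) * ‖c (l + 1)‖ := by gcongr; exact_mod_cast l.succ_pos

end PowerSeries

theorem norm_tsum_smul_pow_succ_sub_le {𝕜 A : Type*} [NormedField 𝕜] [NormedRing A]
    [NormedSpace 𝕜 A] [CompleteSpace A] {c : ℕ → 𝕜} {x y : A}
    (hc : Summable fun l : ℕ => (l : ℝ) * ‖c l‖) (hx : ‖x‖ ≤ 1) (hy : ‖y‖ ≤ 1) :
    ‖(∑' l : ℕ, c (l + 1) • x ^ (l + 1)) - ∑' l : ℕ, c (l + 1) • y ^ (l + 1)‖ ≤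
      (∑' l : ℕ, (l : ℝ) * ‖c l‖) * ‖x - y‖ := by
  have hterm : ∀ l : ℕ, ‖c (l + 1) • x ^ (l + 1) - c (l + 1) • y ^ (l + 1)‖ ≤
      ((l + 1 : ℕ) : ℝ) * ‖c (l + 1)‖ * ‖x - y‖ := fun l => by
    rw [← smul_sub, norm_smul, mul_comm _ ‖c _‖, mul_assoc]
    gcongr
    exact norm_pow_sub_pow_le_of_norm_le_one hx hy _
  rw [← ((summable_norm_smul_pow_succ hc hx).of_norm.tsum_sub
    (summable_norm_smul_pow_succ hc hy).of_norm), hc.tsum_eq_zero_add, Nat.cast_zero, zero_mul,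
    zero_add, ← tsum_mul_right]
  exact tsum_of_norm_bounded ((summable_natCast_succ_mul_norm hc).mul_right _).hasSum hterm

theorem cayleyTransform_eq_cayley {N : ℕ} (Δ : Matrix (Fin N) (Fin N) ℂ) :
    cayleyTransform Δ = cayley Δ := by
  rw [cayleyTransform, Matrix.nonsing_inv_eq_ringInverse]; rfl

/-- For self-adjoint `Δ` and `Δ' = Δ + E` with `‖E‖ < 1`, and a Cayley filter
`G(Δ) = ∑_{l=1}^∞ c_l C(Δ)^l` with `∑_{l=1}^∞ l |c_l| < ∞`, the series defining `G` converges
absolutely in operator norm and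
`‖G(Δ) - G(Δ')‖ ≤ (∑_{l=1}^∞ l |c_l|) ((‖Δ‖ + 1) ‖E‖ / (1 - ‖E‖) + ‖E‖)`. -/
theorem norm_cayley_series_filter_diff_le {N : ℕ} (Δ E : Matrix (Fin N) (Fin N) ℂ)
    (hΔ : IsSelfAdjoint Δ) (hΔ' : IsSelfAdjoint (Δ + E)) (hE : ‖E‖ < 1)
    (c : ℕ → ℂ) (hc : Summable fun l : ℕ => (l : ℝ) * ‖c l‖) :
    Summable (fun l : ℕ => ‖c (l + 1) • cayleyTransform Δ ^ (l + 1)‖) ∧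
    Summable (fun l : ℕ => ‖c (l + 1) • cayleyTransform (Δ + E) ^ (l + 1)‖) ∧
    ‖(∑' l : ℕ, c (l + 1) • cayleyTransform Δ ^ (l + 1)) -
        ∑' l : ℕ, c (l + 1) • cayleyTransform (Δ + E) ^ (l + 1)‖ ≤
      (∑' l : ℕ, (l : ℝ) * ‖c l‖) *
        ((‖Δ‖ + 1) * (‖E‖ / (1 - ‖E‖)) + ‖E‖) := by
  simp only [cayleyTransform_eq_cayley]
  have hC := norm_le_one_of_mem_unitary hΔ.cayley_mem_unitary
  have hC' := norm_le_one_of_mem_unitary hΔ'.cayley_mem_unitary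
  have hdiff : ‖cayley Δ - cayley (Δ + E)‖ ≤ 2 * ‖E‖ := by
    simpa using hΔ.norm_cayley_sub_cayley_le hΔ'
  have hE_le : ‖E‖ ≤ ‖E‖ / (1 - ‖E‖) :=
    le_div_self (norm_nonneg E) (sub_pos.2 hE) (sub_le_self _ (norm_nonneg E))
  have hbound : 2 * ‖E‖ ≤ (‖Δ‖ + 1) * (‖E‖ / (1 - ‖E‖)) + ‖E‖ := by
    nlinarith [mul_nonneg (norm_nonneg Δ) (hE_le.trans' (norm_nonneg E))]
  refine ⟨summable_norm_smul_pow_succ hc hC, summable_norm_smul_pow_succ hc hC',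
    (norm_tsum_smul_pow_succ_sub_le hc hC hC').trans ?_⟩
  exact mul_le_mul_of_nonneg_left (hdiff.trans hbound)
    (tsum_nonneg fun l => mul_nonneg l.cast_nonneg (norm_nonneg _))
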